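/- Let X1 = λ1·R1 + λ2·R2 + λ3·R3 + λ4·R4 and X2 = λ1·R1 + λ2·R2 + λ3·R3' + λ4·R4', where R1, R2, R3, R3', R4, R4' are independent standard exponentials and λ1, λ2, λ3, λ4 are distinct positive reals summing to 1. If max{λ1, λ2, λ3, λ4} ∈ {λ3, λ4}, then lim_{y→∞} P(X1 > y, X2 > y) / P(X1 > y) = 0. -/

import Mathlib

/-!
Write `L` for the largest weight and `m = max λ1 λ2` for the largest shared one, so `m < L`.
By Chernoff, `P(X1 > y, X2 > y) ≤ P(X1 + X2 > 2y) ≤ e^{-2sy} E e^{s(X1 + X2)}`, and since the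
shared weights appear doubled in `X1 + X2 = 2λ1 R1 + 2λ2 R2 + λ3 (R3 + R3') + λ4 (R4 + R4')`
the moment generating function is finite for `s = 1 / (L + m)`. On the other hand
`P(X1 > y) ≥ P(L R_j > y) = e^{-y/L}` for the unshared `R_j` carrying the weight `L`.
As `2s > 1/L`, the ratio is at most a constant times `e^{(1/L - 2s) y} → 0`.
-/

open MeasureTheory ProbabilityTheory Filter

/-- `R` is a standard exponential random variable under `μ`:
its survival function is `exp (-y)` for `y ≥ 0` and `1` for `y < 0`. -/
def IsStdExp {Ω : Type*} [MeasurableSpace Ω] (μ : Measure Ω) (R : Ω → ℝ) : Prop :=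
  Measurable R ∧ ∀ y : ℝ, μ {ω | y < R ω} = ENNReal.ofReal (Real.exp (-(max y 0)))

open Real Set Topology

lemma max_lt_max_max_of_eq_or {l1 l2 l3 l4 : ℝ} (h13 : l1 ≠ l3) (h14 : l1 ≠ l4)
    (h23 : l2 ≠ l3) (h24 : l2 ≠ l4)
    (hdom : max (max l1 l2) (max l3 l4) = l3 ∨ max (max l1 l2) (max l3 l4) = l4) :
    max l1 l2 < max (max l1 l2) (max l3 l4) := by
  have hle := le_max_left (max l1 l2) (max l3 l4)
  rcases hdom with h | h <;> rw [h] at hle ⊢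
  · exact max_lt (((le_max_left _ _).trans hle).lt_of_ne h13)
      (((le_max_right _ _).trans hle).lt_of_ne h23)
  · exact max_lt (((le_max_left _ _).trans hle).lt_of_ne h14)
      (((le_max_right _ _).trans hle).lt_of_ne h24)

lemma tendsto_div_atTop_zero_of_le_exp_of_exp_le {f g : ℝ → ℝ} {K a b : ℝ} (hab : a < b)
    (hf₀ : ∀ y, 0 ≤ f y) (hf : ∀ y, f y ≤ exp (-b * y) * K)
    (hg : ∀ᶠ y in atTop, exp (-a * y) ≤ g y) :
    Tendsto (fun y => f y / g y) atTop (𝓝 0) := by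
  have hbound : ∀ᶠ y in atTop, f y / g y ≤ K * exp ((a - b) * y) := by
    filter_upwards [hg] with y hy
    calc f y / g y ≤ exp (-b * y) * K / exp (-a * y) :=
          div_le_div₀ ((hf₀ y).trans (hf y)) (hf y) (exp_pos _) hy
      _ = K * exp ((a - b) * y) := by
          rw [div_eq_iff (exp_ne_zero _), mul_comm _ K, mul_assoc, ← exp_add]
          ring_nf
  have hlim : Tendsto (fun y => K * exp ((a - b) * y)) atTop (𝓝 0) := by
    simpa using ((tendsto_exp_atBot.comp
      ((tendsto_const_mul_atBot_of_neg (sub_neg.2 hab)).2 tendsto_id)).const_mul K)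
  refine squeeze_zero' ?_ hbound hlim
  filter_upwards [hg] with y hy
  exact div_nonneg (hf₀ y) ((exp_pos _).le.trans hy)

section

variable {Ω : Type*} [MeasurableSpace Ω] {μ : Measure Ω}

namespace IsStdExp

variable {R : Ω → ℝ}

lemma measure_lt (hR : IsStdExp μ R) {y : ℝ} (hy : 0 ≤ y) :
    μ {ω | y < R ω} = ENNReal.ofReal (exp (-y)) := by
  rw [hR.2, max_eq_left hy]

lemma ae_pos [IsProbabilityMeasure μ] (hR : IsStdExp μ R) : ∀ᵐ ω ∂μ, 0 < R ω := by
  rw [ae_iff, ← compl_ofPred, prob_compl_eq_zero_iff (measurableSet_lt measurable_const hR.1),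
    hR.measure_lt le_rfl, neg_zero, exp_zero, ENNReal.ofReal_one]

lemma integrable_exp_mul [IsProbabilityMeasure μ] (hR : IsStdExp μ R) {a : ℝ} (ha₀ : 0 < a)
    (ha₁ : a < 1) : Integrable (fun ω => exp (a * R ω)) μ := by
  have hmeas : Measurable fun ω => exp (a * R ω) := (hR.1.const_mul a).exp
  have hnonneg : 0 ≤ᵐ[μ] fun ω => exp (a * R ω) :=
    Eventually.of_forall fun ω => (exp_pos _).le
  refine ⟨hmeas.aestronglyMeasurable, ?_⟩
  rw [hasFiniteIntegral_iff_ofReal hnonneg,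
    lintegral_eq_lintegral_meas_lt μ hnonneg hmeas.aemeasurable,
    ← Ioc_union_Ioi_eq_Ioi zero_le_one, lintegral_union measurableSet_Ioi Ioc_disjoint_Ioi_same]
  have htail : ∫⁻ t in Ioi (1 : ℝ), μ {ω | t < exp (a * R ω)}
      = ∫⁻ t in Ioi (1 : ℝ), ENNReal.ofReal (t ^ (-1 / a)) := by
    refine setLIntegral_congr_fun measurableSet_Ioi fun t (ht : 1 < t) => ?_
    have ht₀ : 0 < t := one_pos.trans ht
    have hset : {ω | t < exp (a * R ω)} = {ω | log t / a < R ω} := by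
      ext ω
      rw [mem_ofPred_eq, mem_ofPred_eq, div_lt_iff₀ ha₀, mul_comm, ← log_lt_iff_lt_exp ht₀]
    rw [hset, hR.measure_lt (div_nonneg (log_nonneg ht.le) ha₀.le), rpow_def_of_pos ht₀]
    congr 2
    field_simp
  have hint : IntegrableOn (fun t : ℝ => t ^ (-1 / a)) (Ioi 1) :=
    integrableOn_Ioi_rpow_of_lt (by rw [neg_div, neg_lt_neg_iff, lt_div_iff₀ ha₀]; linarith)
      one_pos
  rw [htail]
  refine ENNReal.add_lt_top.mpr ⟨?_, hint.lintegral_lt_top⟩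
  calc ∫⁻ t in Ioc (0 : ℝ) 1, μ {ω | t < exp (a * R ω)}
      ≤ ∫⁻ _ in Ioc (0 : ℝ) 1, 1 := lintegral_mono fun _ => prob_le_one
    _ < ⊤ := by simp

lemma exp_neg_inv_mul_le_measureReal [IsFiniteMeasure μ] (hR : IsStdExp μ R) {X : Ω → ℝ}
    {b : ℝ} (hb : 0 < b) (hX : ∀ᵐ ω ∂μ, b * R ω ≤ X ω) {y : ℝ} (hy : 0 ≤ y) :
    exp (-b⁻¹ * y) ≤ μ.real {ω | y < X ω} := by
  have hy' : 0 ≤ b⁻¹ * y := mul_nonneg (inv_nonneg.2 hb.le) hy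
  rw [neg_mul, ← ENNReal.toReal_ofReal (exp_pos _).le, ← hR.measure_lt hy']
  refine ENNReal.toReal_mono (measure_ne_top _ _) (measure_mono_ae ?_)
  filter_upwards [hX] with ω hω (hlt : b⁻¹ * y < R ω)
  rw [inv_mul_lt_iff₀ hb] at hlt
  exact hlt.trans_le hω

end IsStdExp

lemma integrable_exp_sum_mul_of_isStdExp [IsProbabilityMeasure μ] {ι : Type*} [Fintype ι]
    {R : ι → Ω → ℝ} (hR : ∀ i, IsStdExp μ (R i)) (hind : iIndepFun R μ) {c : ι → ℝ}
    (hc₀ : ∀ i, 0 < c i) (hc₁ : ∀ i, c i < 1) :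
    Integrable (fun ω => exp (∑ i, c i * R i ω)) μ := by
  have hcR : iIndepFun (fun i ω => c i * R i ω) μ :=
    hind.comp (fun i x => c i * x) fun i => measurable_const_mul (c i)
  have := hcR.integrable_exp_mul_sum (t := 1) (s := Finset.univ) (fun i => (hR i).1.const_mul (c i))
    (fun i _ => by simpa using (hR i).integrable_exp_mul (hc₀ i) (hc₁ i))
  simpa [Finset.sum_apply] using this

lemma measureReal_lt_and_lt_le_exp_mul_mgf [IsFiniteMeasure μ] {X₁ X₂ : Ω → ℝ} {s : ℝ}
    (hs : 0 ≤ s) (hint : Integrable (fun ω => exp (s * (X₁ ω + X₂ ω))) μ) (y : ℝ) :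
    μ.real {ω | y < X₁ ω ∧ y < X₂ ω}
      ≤ exp (-(2 * s) * y) * mgf (fun ω => X₁ ω + X₂ ω) μ s := by
  calc μ.real {ω | y < X₁ ω ∧ y < X₂ ω} ≤ μ.real {ω | 2 * y ≤ X₁ ω + X₂ ω} :=
        measureReal_mono fun ω ⟨h₁, h₂⟩ => by simp only [mem_ofPred_eq]; linarith
    _ ≤ exp (-s * (2 * y)) * mgf (fun ω => X₁ ω + X₂ ω) μ s :=
        measure_ge_le_exp_mul_mgf _ hs hint
    _ = exp (-(2 * s) * y) * mgf (fun ω => X₁ ω + X₂ ω) μ s := by ring_nf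

lemma integrable_exp_mul_add_of_two_shared [IsProbabilityMeasure μ] {R : Fin 6 → Ω → ℝ}
    (hR : ∀ i, IsStdExp μ (R i)) (hind : iIndepFun R μ) {l1 l2 l3 l4 s : ℝ}
    (hl1 : 0 < l1) (hl2 : 0 < l2) (hl3 : 0 < l3) (hl4 : 0 < l4) (hs : 0 < s)
    (h1 : s * (2 * l1) < 1) (h2 : s * (2 * l2) < 1) (h3 : s * l3 < 1) (h4 : s * l4 < 1)
    {X1 X2 : Ω → ℝ}
    (hX1 : ∀ ω, X1 ω = l1 * R 0 ω + l2 * R 1 ω + l3 * R 2 ω + l4 * R 3 ω)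
    (hX2 : ∀ ω, X2 ω = l1 * R 0 ω + l2 * R 1 ω + l3 * R 4 ω + l4 * R 5 ω) :
    Integrable (fun ω => exp (s * (X1 ω + X2 ω))) μ := by
  have hc : ∀ i, 0 < s * ![2 * l1, 2 * l2, l3, l4, l3, l4] i
      ∧ s * ![2 * l1, 2 * l2, l3, l4, l3, l4] i < 1 := by
    intro i
    fin_cases i <;> simp [*]
  convert integrable_exp_sum_mul_of_isStdExp hR hind (fun i => (hc i).1) (fun i => (hc i).2)
    using 3 with ω
  simp only [hX1, hX2, Fin.sum_univ_six, Matrix.cons_val_zero, Matrix.cons_val]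
  ring

lemma exists_ae_max_mul_le [IsProbabilityMeasure μ] {R : Fin 6 → Ω → ℝ}
    (hR : ∀ i, IsStdExp μ (R i)) {l1 l2 l3 l4 : ℝ}
    (hl1 : 0 < l1) (hl2 : 0 < l2) (hl3 : 0 < l3) (hl4 : 0 < l4) {X1 : Ω → ℝ}
    (hX1 : ∀ ω, X1 ω = l1 * R 0 ω + l2 * R 1 ω + l3 * R 2 ω + l4 * R 3 ω)
    (hdom : max (max l1 l2) (max l3 l4) = l3 ∨ max (max l1 l2) (max l3 l4) = l4) :
    ∃ j, ∀ᵐ ω ∂μ, max (max l1 l2) (max l3 l4) * R j ω ≤ X1 ω := by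
  have hpos : ∀ᵐ ω ∂μ, ∀ i, 0 < R i ω := ae_all_iff.2 fun i => (hR i).ae_pos
  rcases hdom with h | h <;> rw [h]
  · exact ⟨2, hpos.mono fun ω hω => by
      linarith [hX1 ω, mul_pos hl1 (hω 0), mul_pos hl2 (hω 1), mul_pos hl4 (hω 3)]⟩
  · exact ⟨3, hpos.mono fun ω hω => by
      linarith [hX1 ω, mul_pos hl1 (hω 0), mul_pos hl2 (hω 1), mul_pos hl3 (hω 2)]⟩

end

theorem stmt_6_general {Ω : Type*} [MeasurableSpace Ω] (μ : Measure Ω) [IsProbabilityMeasure μ]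
    (R : Fin 6 → Ω → ℝ) (hR : ∀ i, IsStdExp μ (R i))
    (hind : iIndepFun R μ)
    (l1 l2 l3 l4 : ℝ) (hpos : 0 < l1 ∧ 0 < l2 ∧ 0 < l3 ∧ 0 < l4)
    (hdist : l1 ≠ l2 ∧ l1 ≠ l3 ∧ l1 ≠ l4 ∧ l2 ≠ l3 ∧ l2 ≠ l4 ∧ l3 ≠ l4)
    (X1 X2 : Ω → ℝ)
    (hX1 : ∀ ω, X1 ω = l1 * R 0 ω + l2 * R 1 ω + l3 * R 2 ω + l4 * R 3 ω)
    (hX2 : ∀ ω, X2 ω = l1 * R 0 ω + l2 * R 1 ω + l3 * R 4 ω + l4 * R 5 ω)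
    (hdom : max (max l1 l2) (max l3 l4) = l3 ∨ max (max l1 l2) (max l3 l4) = l4) :
    Tendsto (fun y : ℝ =>
        (μ {ω | y < X1 ω ∧ y < X2 ω}).toReal / (μ {ω | y < X1 ω}).toReal)
      atTop (nhds 0) := by
  obtain ⟨hl1, hl2, hl3, hl4⟩ := hpos
  obtain ⟨-, h13, h14, h23, h24, -⟩ := hdist
  have hmL := max_lt_max_max_of_eq_or h13 h14 h23 h24 hdom
  obtain ⟨j, hj⟩ := exists_ae_max_mul_le (μ := μ) hR hl1 hl2 hl3 hl4 hX1 hdom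
  set L := max (max l1 l2) (max l3 l4)
  set m := max l1 l2
  have h1m : l1 ≤ m := le_max_left _ _
  have h2m : l2 ≤ m := le_max_right _ _
  have h3L : l3 ≤ L := (le_max_left _ _).trans (le_max_right _ _)
  have h4L : l4 ≤ L := (le_max_right _ _).trans (le_max_right _ _)
  set s := (L + m)⁻¹
  have hs : ∀ x, x < L + m → s * x < 1 := fun x hx => by
    rwa [inv_mul_lt_iff₀ (by linarith), mul_one]
  have hint := integrable_exp_mul_add_of_two_shared hR hind hl1 hl2 hl3 hl4 (by positivity)
    (hs _ (by linarith)) (hs _ (by linarith)) (hs _ (by linarith)) (hs _ (by linarith)) hX1 hX2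
  refine tendsto_div_atTop_zero_of_le_exp_of_exp_le (a := L⁻¹) (b := 2 * s) ?_
    (fun _ => ENNReal.toReal_nonneg) (measureReal_lt_and_lt_le_exp_mul_mgf (by positivity) hint)
    ((eventually_ge_atTop 0).mono fun y hy =>
      (hR j).exp_neg_inv_mul_le_measureReal (by linarith) hj hy)
  rw [← div_eq_mul_inv, inv_lt_iff_one_lt_mul₀ (by linarith), div_mul_eq_mul_div,
    one_lt_div (by linarith)]
  linarith

/-- X1 and X2 share R1 (index 0) and R2 (index 1); indices 2,3 are R3,R4 for X1
and indices 4,5 are R3'\'',R4'\'' for X2. If the dominant mixture weight is λ3 or λ4,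
the pair is asymptotically tail independent. -/
theorem stmt_6 {Ω : Type*} [MeasurableSpace Ω] (μ : Measure Ω) [IsProbabilityMeasure μ]
    (R : Fin 6 → Ω → ℝ) (hR : ∀ i, IsStdExp μ (R i))
    (hind : iIndepFun R μ)
    (l1 l2 l3 l4 : ℝ) (hpos : 0 < l1 ∧ 0 < l2 ∧ 0 < l3 ∧ 0 < l4)
    (hdist : l1 ≠ l2 ∧ l1 ≠ l3 ∧ l1 ≠ l4 ∧ l2 ≠ l3 ∧ l2 ≠ l4 ∧ l3 ≠ l4)
    (hsum : l1 + l2 + l3 + l4 = 1)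
    (X1 X2 : Ω → ℝ)
    (hX1 : ∀ ω, X1 ω = l1 * R 0 ω + l2 * R 1 ω + l3 * R 2 ω + l4 * R 3 ω)
    (hX2 : ∀ ω, X2 ω = l1 * R 0 ω + l2 * R 1 ω + l3 * R 4 ω + l4 * R 5 ω)
    (hdom : max (max l1 l2) (max l3 l4) = l3 ∨ max (max l1 l2) (max l3 l4) = l4) :
    Tendsto (fun y : ℝ =>
        (μ {ω | y < X1 ω ∧ y < X2 ω}).toReal / (μ {ω | y < X1 ω}).toReal)
      atTop (nhds 0) :=
  stmt_6_general μ R hR hind l1 l2 l3 l4 hpos hdist X1 X2 hX1 hX2 hdom
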